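/- arXiv:2009.05937 — 6 statements merged into one kernel-verified Lean document; each statement's English description precedes it below -/
import Mathlib

section
/- Let q = 2^m and assume A, B, C ∈ F_q. If the equation Az² + Bz + C = 0 has a solution z ∈ U with z ≠ 1, then A = C. -/
/-!
On the unit circle the `q`-Frobenius acts as inversion, `z ^ q = z⁻¹`, while it fixes `A`, `B`, `C`.
Applying it to `A z² + B z + C = 0` and clearing denominators gives the reversed equation
`A + B z + C z² = 0`; subtracting, `(A - C)(z² - 1) = 0`. In characteristic two
`z² - 1 = (z - 1)²`, which vanishes only at `z = 1`.
-/

theorem sub_mul_sq_sub_one_eq_zero_of_map_mul_self_eq_one {R : Type*} [CommRing R]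
    (σ : R →+* R) {A B C z : R} (hA : σ A = A) (hB : σ B = B) (hC : σ C = C)
    (hz : σ z * z = 1) (heq : A * z ^ 2 + B * z + C = 0) :
    (A - C) * (z ^ 2 - 1) = 0 := by
  have hσ : A * σ z ^ 2 + B * σ z + C = 0 := by
    simpa [hA, hB, hC] using congrArg σ heq
  linear_combination heq - z ^ 2 * hσ + (A * (σ z * z + 1) + B * z) * hz

theorem FiniteField.charP_two_of_card_eq_two_pow {F : Type*} [Field F] [Fintype F] {k : ℕ}
    (h : Fintype.card F = 2 ^ k) : CharP F 2 := by
  have hk : k ≠ 0 := by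
    rintro rfl
    exact (Fintype.one_lt_card (α := F)).ne' h
  refine ringChar.of_eq ?_
  rw [FiniteField.even_card_iff_char_two, h, Nat.pow_mod, Nat.mod_self, zero_pow hk, Nat.zero_mod]

theorem quadratic_unit_circle_solution_general
    (m : ℕ) (F : Type*) [Field F] [Fintype F]
    (hcard : Fintype.card F = 2 ^ (2 * m))
    (A B C z : F)
    (hA : A ^ (2 ^ m) = A) (hB : B ^ (2 ^ m) = B) (hC : C ^ (2 ^ m) = C)
    (hz : z ^ (2 ^ m + 1) = 1) (hz1 : z ≠ 1)
    (heq : A * z ^ 2 + B * z + C = 0) :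
    A = C := by
  have := FiniteField.charP_two_of_card_eq_two_pow hcard
  have hfactor : (A - C) * (z ^ 2 - 1) = 0 :=
    sub_mul_sq_sub_one_eq_zero_of_map_mul_self_eq_one (iterateFrobenius F 2 m) hA hB hC
      (by rwa [iterateFrobenius_def, ← pow_succ]) heq
  have hsq : z ^ 2 - 1 ≠ 0 := by
    rwa [sub_ne_zero, ← one_pow 2, Ne, CharTwo.sq_inj]
  exact sub_eq_zero.mp ((mul_eq_zero.mp hfactor).resolve_right hsq)

/-- If `A, B, C` lie in the subfield `𝔽_q` of `𝔽_{q²}` (`q = 2^m`) and the equation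
`Az² + Bz + C = 0` has a solution `z ≠ 1` on the unit circle `U = {z : z^(q+1) = 1}`,
then `A = C`. Membership in `𝔽_q` is expressed via `a ^ (2^m) = a`. -/
theorem quadratic_unit_circle_solution
    (m : ℕ) (hm : 0 < m) (F : Type*) [Field F] [Fintype F]
    (hcard : Fintype.card F = 2 ^ (2 * m))
    (A B C z : F)
    (hA : A ^ (2 ^ m) = A) (hB : B ^ (2 ^ m) = B) (hC : C ^ (2 ^ m) = C)
    (hz : z ^ (2 ^ m + 1) = 1) (hz1 : z ≠ 1)
    (heq : A * z ^ 2 + B * z + C = 0) :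
    A = C :=
  quadratic_unit_circle_solution_general m F hcard A B C z hA hB hC hz hz1 heq
end

section
/- Let q = 2^m. Any function f : F_{q²} → F_{q²} given by f(x) = x^{3q} + a₁x^{2q+1} + a₃x³ with a₁, a₃ ∈ F_{q²} is affine equivalent to a function f'(x) = x^{3q} + a₁'x^{2q+1} + a₃'x³ where a₁' ∈ F_q and a₃' ∈ F_{q²}. -/
/-- `f` is almost perfect nonlinear (APN): for every `a ≠ 0` and every `b`, the equation
`f (x + a) + f x = b` has at most two solutions `x`. -/
def IsAPN {F : Type*} [Field F] (f : F → F) : Prop :=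
  ∀ a : F, a ≠ 0 → ∀ b : F, {x : F | f (x + a) + f x = b}.ncard ≤ 2

/-- `L` is an affine permutation: it is bijective and `x ↦ L x - L 0` is additive
(over a field of characteristic 2, additive maps are exactly the `𝔽₂`-linear ones). -/
def IsAffinePerm {F : Type*} [Field F] (L : F → F) : Prop :=
  Function.Bijective L ∧ ∀ x y : F, L (x + y) + L 0 = L x + L y

/-- `f` and `g` are affine equivalent: `g = L₁ ∘ f ∘ L₂` for affine permutations `L₁, L₂`. -/
def AffEquiv {F : Type*} [Field F] (f g : F → F) : Prop :=
  ∃ L₁ L₂ : F → F, IsAffinePerm L₁ ∧ IsAffinePerm L₂ ∧ ∀ x : F, g x = L₁ (f (L₂ x))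

/-!
Rescaling `x ↦ c x` and dividing by `c^{3q}` turns the middle coefficient `a₁` into
`a₁ c^{2q+1} / c^{3q}`. In characteristic 2 every element is a square, so for `a₁ = s²` with
`s ≠ 0` the choice `c = s⁻¹` makes that coefficient the norm `s^{q+1}`, which lies in `𝔽_q`.
-/

section

variable {F : Type*} [Field F]

lemma isAffinePerm_mul_left {c : F} (hc : c ≠ 0) : IsAffinePerm (c * ·) :=
  ⟨⟨mul_right_injective₀ hc, fun y => ⟨c⁻¹ * y, mul_inv_cancel_left₀ hc y⟩⟩,
    fun x y => by ring⟩

lemma affEquiv_mul_left_comp_mul_left {b c : F} (hb : b ≠ 0) (hc : c ≠ 0) (f : F → F) :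
    AffEquiv f (fun x => b * f (c * x)) :=
  ⟨_, _, isAffinePerm_mul_left hb, isAffinePerm_mul_left hc, fun _ => rfl⟩

def kimFun (q : ℕ) (a₁ a₃ x : F) : F :=
  x ^ (3 * q) + a₁ * x ^ (2 * q + 1) + a₃ * x ^ 3

lemma kimFun_mul_left {c : F} (hc : c ≠ 0) (q : ℕ) (a₁ a₃ x : F) :
    (c ^ (3 * q))⁻¹ * kimFun q a₁ a₃ (c * x) =
      kimFun q (a₁ * c ^ (2 * q + 1) / c ^ (3 * q)) (a₃ * c ^ 3 / c ^ (3 * q)) x := by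
  unfold kimFun
  field_simp
  ring

lemma affEquiv_kimFun_rescale {c : F} (hc : c ≠ 0) (q : ℕ) (a₁ a₃ : F) :
    AffEquiv (kimFun q a₁ a₃)
      (kimFun q (a₁ * c ^ (2 * q + 1) / c ^ (3 * q)) (a₃ * c ^ 3 / c ^ (3 * q))) := by
  convert affEquiv_mul_left_comp_mul_left (inv_ne_zero (pow_ne_zero (3 * q) hc)) hc
    (kimFun q a₁ a₃) using 2
  exact (kimFun_mul_left hc q a₁ a₃ _).symm

variable [Fintype F] {q : ℕ}

lemma pow_succ_pow_eq_of_card_eq_sq (hcard : Fintype.card F = q ^ 2) (s : F) :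
    (s ^ (q + 1)) ^ q = s ^ (q + 1) := by
  calc (s ^ (q + 1)) ^ q = s ^ q ^ 2 * s ^ q := by rw [← pow_mul, ← pow_add]; ring_nf
    _ = s ^ (q + 1) := by rw [← hcard, FiniteField.pow_card, pow_succ']

lemma exists_rescale_coeff_pow_eq (hchar : ringChar F = 2) (hcard : Fintype.card F = q ^ 2)
    (a₁ : F) : ∃ c : F, c ≠ 0 ∧
      (a₁ * c ^ (2 * q + 1) / c ^ (3 * q)) ^ q = a₁ * c ^ (2 * q + 1) / c ^ (3 * q) := by
  rcases eq_or_ne a₁ 0 with rfl | ha₁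
  · have hq : q ≠ 0 := by rintro rfl; simp at hcard
    exact ⟨1, one_ne_zero, by simp [hq]⟩
  obtain ⟨s, rfl⟩ := FiniteField.isSquare_of_char_two hchar a₁
  have hs : s ≠ 0 := by rintro rfl; simp at ha₁
  have hnorm : s * s * s⁻¹ ^ (2 * q + 1) / s⁻¹ ^ (3 * q) = s ^ (q + 1) := by
    simp only [inv_pow]
    field_simp
    ring
  exact ⟨s⁻¹, inv_ne_zero hs, by rw [hnorm, pow_succ_pow_eq_of_card_eq_sq hcard]⟩

end

/-- Any `f(x) = x^{3q} + a₁x^{2q+1} + a₃x³` on `𝔽_{q²}` (`q = 2^m`) is affine equivalent to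
a function of the same shape whose middle coefficient lies in the subfield `𝔽_q`. -/
theorem kim_type_no_a2_coeff_in_subfield
    (m : ℕ) (hm : 0 < m) (F : Type*) [Field F] [Fintype F]
    (hcard : Fintype.card F = 2 ^ (2 * m))
    (a₁ a₃ : F) (f : F → F)
    (hf : ∀ x : F, f x = x ^ (3 * 2 ^ m) + a₁ * x ^ (2 * 2 ^ m + 1) + a₃ * x ^ 3) :
    ∃ a₁' a₃' : F, a₁' ^ (2 ^ m) = a₁' ∧
      AffEquiv f (fun x : F => x ^ (3 * 2 ^ m) + a₁' * x ^ (2 * 2 ^ m + 1) + a₃' * x ^ 3) := by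
  have hchar : ringChar F = 2 := by
    rw [FiniteField.even_card_iff_char_two, hcard, Nat.pow_mod]
    simp [hm.ne']
  have hcard' : Fintype.card F = (2 ^ m) ^ 2 := by rw [hcard, ← pow_mul, mul_comm]
  obtain ⟨c, hc, hsub⟩ := exists_rescale_coeff_pow_eq hchar hcard' a₁
  obtain rfl : f = kimFun (2 ^ m) a₁ a₃ := funext hf
  exact ⟨_, _, hsub, affEquiv_kimFun_rescale hc (2 ^ m) a₁ a₃⟩
end

section
/- Let m ≥ 4 be even and q = 2^m. Let f : F_{q²} → F_{q²} be given by f(x) = x^{3q} + a₁x^{2q+1} + a₂x^{q+2} + a₃x³ where a₁ = (u³+z)²/(u(u²+z)²), a₂ = (u³+z)²/(u²+z)², a₃ = uz²(u+1)²/(u²+z)² for some u, z ∈ U with u² ≠ z. If f is APN, then f is affine equivalent to G₁(x) = x³ or f is affine equivalent to G₂(x) = x^{2^{m-1}+1}. -/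
/-!
Put `q = 2 ^ m` and `y = x ^ q`. Then `f x = K(x, y)` for a binary cubic form `K`, and in
characteristic 2 the coefficients simplify to `a₁ = u + a₃ u⁻²`, `a₂ = u² + a₃ u⁻¹`.
Since `m` is even, `𝔽_q` contains a primitive cube root of unity `ω`.

If `a₃ ≠ z`: with `s = x + ω u⁻¹ y` (so `s ^ q = y + ω u x`) one has
`K(x, y) = β s^q s² + γ s (s^q)²`, i.e. `f = M₁ ∘ G₂ ∘ M₂` where `M₂ x = x + ω u⁻¹ x ^ q` and
`M₁ w = β w² + γ w^(2q)`. A map `x ↦ b x + c x ^ q` is injective when `b^(q+1) ≠ c^(q+1)`;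
for `M₂` this is `ω² ≠ 1`, for `M₁` it is `β^(q+1) + γ^(q+1) = (a₃ + z)² / z² ≠ 0`.

If `a₃ = z`: `r = a₃ u⁻²` lies on the unit circle, so by Hilbert 90 `r = a^(q-1)` for some
`a ≠ 0`, and `f a = a³ K(1, r) = 0 = f 0`. As `f (ω x) = f x`, the equation
`f (x + a) + f x = 0` then has the three solutions `0, a, ω a`, so `f` is not APN.
-/

open Function

theorem ne_zero_of_pow_succ_eq_one {M₀ : Type*} [MonoidWithZero M₀] [Nontrivial M₀] {u : M₀}
    {n : ℕ} (hu : u ^ (n + 1) = 1) : u ≠ 0 :=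
  right_ne_zero_of_mul_eq_one (by rwa [← pow_succ])

theorem pow_eq_inv_of_pow_succ_eq_one {M₀ : Type*} [GroupWithZero M₀] {u : M₀} {n : ℕ}
    (hu : u ^ (n + 1) = 1) : u ^ n = u⁻¹ :=
  eq_inv_of_mul_eq_one_left (by rwa [← pow_succ])

theorem pow_two_pow_pred_add_one_sq {M : Type*} [Monoid M] {m : ℕ} (hm : m ≠ 0) (s : M) :
    (s ^ (2 ^ (m - 1) + 1)) ^ 2 = s ^ 2 ^ m * s ^ 2 := by
  rw [← pow_mul, add_mul, one_mul, pow_add, ← pow_succ,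
    Nat.sub_add_cancel (Nat.one_le_iff_ne_zero.2 hm)]

theorem IsCyclic.exists_pow_eq_of_pow_eq_one {G : Type*} [CommGroup G] [IsCyclic G] [Finite G]
    {d e : ℕ} (hG : Nat.card G = d * e) {r : G} (hr : r ^ e = 1) : ∃ g : G, g ^ d = r := by
  have hd : d ≠ 0 := by
    rintro rfl
    exact Nat.card_pos.ne' (by simpa using hG)
  have hle : (powMonoidHom d : G →* G).range ≤ (powMonoidHom e).ker := by
    rintro _ ⟨g, rfl⟩
    simp [← pow_mul, ← hG, pow_card_eq_one']
  have hcard :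
      Nat.card (powMonoidHom e : G →* G).ker ≤ Nat.card (powMonoidHom d : G →* G).range := by
    rw [IsCyclic.card_powMonoidHom_range, IsCyclic.card_powMonoidHom_ker, hG,
      Nat.gcd_mul_left_left, Nat.gcd_mul_right_left,
      Nat.mul_div_cancel_left _ (Nat.pos_of_ne_zero hd)]
  have hr' : r ∈ (powMonoidHom e : G →* G).ker := hr
  rw [← Subgroup.eq_of_le_of_card_ge hle hcard] at hr'
  exact hr'

section FiniteField

variable {F : Type*} [Field F] [Fintype F] {m : ℕ}

theorem pow_two_pow_two_pow (hcard : Fintype.card F = 2 ^ (2 * m)) (x : F) :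
    (x ^ 2 ^ m) ^ 2 ^ m = x := by
  rw [← pow_mul, ← pow_add, ← two_mul, ← hcard, FiniteField.pow_card]

theorem exists_pow_two_pow_eq_mul (hcard : Fintype.card F = 2 ^ (2 * m)) {r : F}
    (hr : r ^ (2 ^ m + 1) = 1) : ∃ a : F, a ≠ 0 ∧ a ^ 2 ^ m = r * a := by
  have hr0 := ne_zero_of_pow_succ_eq_one hr
  have hunits : Nat.card Fˣ = (2 ^ m - 1) * (2 ^ m + 1) := by
    rw [Nat.card_units, Nat.card_eq_fintype_card, hcard, mul_comm, pow_mul, ← one_pow 2,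
      Nat.sq_sub_sq, one_pow, mul_comm]
  obtain ⟨g, hg⟩ := IsCyclic.exists_pow_eq_of_pow_eq_one hunits (r := Units.mk0 r hr0)
    (Units.ext (by simpa using hr))
  refine ⟨g, g.ne_zero, ?_⟩
  rw [← Units.val_mk0 hr0, ← hg, Units.val_pow_eq_pow_val, ← pow_succ,
    Nat.sub_add_cancel Nat.one_le_two_pow]

theorem exists_cubeRoot_pow_two_pow_eq_self (hcard : Fintype.card F = 2 ^ (2 * m))
    (hm : Even m) :
    ∃ ω : F, ω ^ 2 + ω + 1 = 0 ∧ ω ^ 2 ^ m = ω := by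
  have h3 : 3 ∣ Nat.card Fˣ := by
    rw [Nat.card_units, Nat.card_eq_fintype_card, hcard, pow_mul]
    simpa using Nat.sub_dvd_pow_sub_pow 4 1 m
  obtain ⟨ζ, hζ⟩ := exists_prime_orderOf_dvd_card' 3 h3
  have hprim : IsPrimitiveRoot (ζ : F) 3 := by
    simpa [orderOf_units, hζ] using IsPrimitiveRoot.orderOf (ζ : F)
  have hq : ζ ^ 2 ^ m = ζ ^ 1 := by
    obtain ⟨t, rfl⟩ := hm
    rw [pow_eq_pow_iff_modEq, hζ, ← two_mul, pow_mul]
    simpa using Nat.ModEq.pow t (by decide : 2 ^ 2 ≡ 1 [MOD 3])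
  refine ⟨ζ, ?_, by simpa using congrArg Units.val hq⟩
  have hsum := hprim.geom_sum_eq_zero (by norm_num)
  simp only [Finset.sum_range_succ, Finset.sum_range_zero] at hsum
  linear_combination hsum

end FiniteField

theorem AddEquiv.isAffinePerm {F : Type*} [Field F] (e : F ≃+ F) : IsAffinePerm e :=
  ⟨e.bijective, fun x y => by simp⟩

theorem affEquiv_of_eq_comp {F : Type*} [Field F] [Finite F] {f g : F → F} (L₁ L₂ : F →+ F)
    (h₁ : Injective L₁) (h₂ : Injective L₂) (h : ∀ x, f x = L₁ (g (L₂ x))) :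
    AffEquiv f g := by
  let e₁ := AddEquiv.ofBijective L₁ (Finite.injective_iff_bijective.1 h₁)
  let e₂ := AddEquiv.ofBijective L₂ (Finite.injective_iff_bijective.1 h₂)
  refine ⟨e₁.symm, e₂.symm, e₁.symm.isAffinePerm, e₂.symm.isAffinePerm, fun x => ?_⟩
  rw [h, eq_comm, AddEquiv.symm_apply_eq]
  simp [e₁, e₂]

section KimForm

variable {R : Type*} [CommRing R]

-- The Kim-type function is `x ↦ kimForm a₁ a₂ a₃ x (x ^ q)`.
def kimForm (a₁ a₂ a₃ x y : R) : R :=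
  y ^ 3 + a₁ * y ^ 2 * x + a₂ * y * x ^ 2 + a₃ * x ^ 3

theorem kimForm_mul_mul (a₁ a₂ a₃ t x y : R) :
    kimForm a₁ a₂ a₃ (t * x) (t * y) = t ^ 3 * kimForm a₁ a₂ a₃ x y := by
  unfold kimForm
  ring

variable [CharP R 2] {u v : R}

theorem kimForm_one_eq_zero (huv : u * v = 1) (a : R) :
    kimForm (u + a * v ^ 2) (u ^ 2 + a * v) a 1 (a * v ^ 2) = 0 := by
  unfold kimForm
  grind

theorem kimForm_eq_mul_add_mul {ω : R} (hω : ω ^ 2 + ω + 1 = 0) (huv : u * v = 1) (a x y : R) :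
    kimForm (u + a * v ^ 2) (u ^ 2 + a * v) a x y =
      (ω ^ 2 * u ^ 2 + ω * a * v) * ((y + ω * u * x) * (x + ω * v * y) ^ 2)
        + (ω ^ 2 * a * v ^ 2 + ω * u) * ((x + ω * v * y) * (y + ω * u * x) ^ 2) := by
  unfold kimForm
  grind

-- `β ^ (q + 1) + γ ^ (q + 1)` for the `β, γ` of `kimForm_eq_mul_add_mul`, using `u ^ q = v` and
-- `a ^ q = a w²`, where `v = u⁻¹` and `w = z⁻¹`.
theorem kim_norm_add_norm_eq {ω : R} (hω : ω ^ 2 + ω + 1 = 0) (huv : u * v = 1) {z w : R}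
    (hzw : z * w = 1) (a : R) :
    (ω ^ 2 * v ^ 2 + ω * (a * w ^ 2) * u) * (ω ^ 2 * u ^ 2 + ω * a * v)
      + (ω ^ 2 * (a * w ^ 2) * u ^ 2 + ω * v) * (ω ^ 2 * a * v ^ 2 + ω * u)
      = (a + z) ^ 2 * w ^ 2 := by
  grind

end KimForm

section CharTwo

variable {F : Type*} [Field F] [CharP F 2] {m : ℕ}

theorem ne_one_of_sq_add_add_one_eq_zero {ω : F} (hω : ω ^ 2 + ω + 1 = 0) : ω ≠ 1 := by
  rintro rfl
  simp [CharTwo.add_self_eq_zero] at hω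

theorem not_isAPN_of_forall_map_mul_eq [Finite F] {f : F → F} {ω a : F}
    (hω : ω ^ 2 + ω + 1 = 0) (hf : ∀ x, f (ω * x) = f x) (ha : a ≠ 0) (hfa : f a = f 0) :
    ¬ IsAPN f := by
  intro hAPN
  have hω0 : ω ≠ 0 := by
    rintro rfl
    simp at hω
  have hsub : ({0, a, ω * a} : Set F) ⊆ {x | f (x + a) + f x = 0} := by
    rintro x (rfl | rfl | rfl)
    · simp [hfa, CharTwo.add_self_eq_zero]
    · simp [hfa, CharTwo.add_self_eq_zero]
    · have hω2 : ω * a + a = ω * (ω * a) := by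
        linear_combination (-a) * hω + (a * ω + a) * CharTwo.two_eq_zero (R := F)
      show f (ω * a + a) + f (ω * a) = 0
      rw [hω2, hf, CharTwo.add_self_eq_zero]
  have hthree : ({0, a, ω * a} : Set F).ncard = 3 := by
    refine Set.ncard_eq_three.2 ⟨0, a, ω * a, ha.symm, ?_, ?_, rfl⟩
    · exact (mul_ne_zero hω0 ha).symm
    · intro h
      exact ne_one_of_sq_add_add_one_eq_zero hω (mul_right_cancel₀ ha (by rw [one_mul, ← h]))
  have := Set.ncard_le_ncard hsub (Set.toFinite _)
  have := hAPN a ha 0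
  omega

def linearizedHom (m : ℕ) (b c : F) : F →+ F where
  toFun x := b * x + c * x ^ 2 ^ m
  map_zero' := by simp
  map_add' x y := by
    simp only [add_pow_char_pow]
    ring

theorem linearizedHom_apply (m : ℕ) (b c x : F) :
    linearizedHom m b c x = b * x + c * x ^ 2 ^ m :=
  rfl

theorem linearizedHom_injective [Fintype F] (hcard : Fintype.card F = 2 ^ (2 * m))
    {b c : F} (h : b ^ (2 ^ m + 1) ≠ c ^ (2 ^ m + 1)) : Injective (linearizedHom m b c) := by
  refine (injective_iff_map_eq_zero _).2 fun d hd => by_contra fun hd0 => h ?_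
  have h₁ : b * d = c * d ^ 2 ^ m := CharTwo.add_eq_zero.1 hd
  have h₂ : b ^ 2 ^ m * d ^ 2 ^ m = c ^ 2 ^ m * d := by
    rw [← mul_pow, h₁, mul_pow, pow_two_pow_two_pow hcard]
  apply mul_right_cancel₀ (pow_ne_zero (2 ^ m + 1) hd0)
  rw [pow_succ, pow_succ, pow_succ]
  linear_combination (b ^ 2 ^ m * d ^ 2 ^ m) * h₁ + (c * d ^ 2 ^ m) * h₂

theorem linearizedHom_one_pow_two_pow [Fintype F] (hcard : Fintype.card F = 2 ^ (2 * m))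
    (c x : F) :
    linearizedHom m 1 c x ^ 2 ^ m = x ^ 2 ^ m + c ^ 2 ^ m * x := by
  rw [linearizedHom_apply, one_mul, add_pow_char_pow, mul_pow, pow_two_pow_two_pow hcard]

theorem pow_two_pow_succ (x : F) : x ^ (2 ^ m + 1) = iterateFrobenius F 2 m x * x := by
  rw [pow_succ, iterateFrobenius_def]

theorem kimCoeff₁_eq {u z : F} (hu0 : u ≠ 0) (huz : u ^ 2 + z ≠ 0) :
    (u ^ 3 + z) ^ 2 / (u * (u ^ 2 + z) ^ 2)
      = u + u * z ^ 2 * (u + 1) ^ 2 / (u ^ 2 + z) ^ 2 * u⁻¹ ^ 2 := by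
  field_simp
  grind

theorem kimCoeff₂_eq {u z : F} (hu0 : u ≠ 0) (huz : u ^ 2 + z ≠ 0) :
    (u ^ 3 + z) ^ 2 / (u ^ 2 + z) ^ 2
      = u ^ 2 + u * z ^ 2 * (u + 1) ^ 2 / (u ^ 2 + z) ^ 2 * u⁻¹ := by
  field_simp
  grind

theorem kimCoeff₃_pow_two_pow {u z : F} (hu : u ^ (2 ^ m + 1) = 1) (hz : z ^ (2 ^ m + 1) = 1)
    (huz : u ^ 2 + z ≠ 0) :
    (u * z ^ 2 * (u + 1) ^ 2 / (u ^ 2 + z) ^ 2) ^ 2 ^ m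
      = u * z ^ 2 * (u + 1) ^ 2 / (u ^ 2 + z) ^ 2 / z ^ 2 := by
  have hu0 := ne_zero_of_pow_succ_eq_one hu
  have hz0 := ne_zero_of_pow_succ_eq_one hz
  rw [← iterateFrobenius_def (p := 2)]
  simp only [map_div₀, map_mul, map_pow, map_add, map_one, iterateFrobenius_def,
    pow_eq_inv_of_pow_succ_eq_one hu, pow_eq_inv_of_pow_succ_eq_one hz]
  have hconj : u⁻¹ ^ 2 + z⁻¹ = (u ^ 2 + z) / (u ^ 2 * z) := by
    field_simp
    ring
  rw [hconj]
  field_simp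
  ring

theorem not_isAPN_kimForm [Fintype F] (hcard : Fintype.card F = 2 ^ (2 * m)) {ω u a : F}
    (hω : ω ^ 2 + ω + 1 = 0) (hωq : ω ^ 2 ^ m = ω) (hu : u ^ (2 ^ m + 1) = 1)
    (ha : a ^ (2 ^ m + 1) = 1) :
    ¬ IsAPN fun x => kimForm (u + a * u⁻¹ ^ 2) (u ^ 2 + a * u⁻¹) a x (x ^ 2 ^ m) := by
  have hu0 := ne_zero_of_pow_succ_eq_one hu
  have hr : (a * u⁻¹ ^ 2) ^ (2 ^ m + 1) = 1 := by
    rw [mul_pow, ← pow_mul, mul_comm 2, pow_mul, inv_pow, hu, ha]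
    simp
  obtain ⟨b, hb0, hb⟩ := exists_pow_two_pow_eq_mul hcard hr
  refine not_isAPN_of_forall_map_mul_eq hω (fun x => ?_) hb0 ?_
  · have hω3 : ω ^ 3 = 1 := by linear_combination (ω - 1) * hω
    rw [mul_pow, hωq, kimForm_mul_mul, hω3, one_mul]
  · calc kimForm _ _ a b (b ^ 2 ^ m) = kimForm _ _ a (b * 1) (b * (a * u⁻¹ ^ 2)) := by
          rw [hb, mul_one, mul_comm b]
      _ = 0 := by rw [kimForm_mul_mul, kimForm_one_eq_zero (mul_inv_cancel₀ hu0), mul_zero]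
      _ = kimForm _ _ a 0 (0 ^ 2 ^ m) := by simp [kimForm]

theorem kimForm_eq_linearized_gold [Fintype F] (hcard : Fintype.card F = 2 ^ (2 * m))
    (hm : m ≠ 0) {ω u : F} (hω : ω ^ 2 + ω + 1 = 0) (hωq : ω ^ 2 ^ m = ω)
    (hu : u ^ (2 ^ m + 1) = 1) (a x : F) :
    kimForm (u + a * u⁻¹ ^ 2) (u ^ 2 + a * u⁻¹) a x (x ^ 2 ^ m) =
      linearizedHom m (ω ^ 2 * u ^ 2 + ω * a * u⁻¹) (ω ^ 2 * a * u⁻¹ ^ 2 + ω * u)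
        ((linearizedHom m 1 (ω * u⁻¹) x ^ (2 ^ (m - 1) + 1)) ^ 2) := by
  have hu0 := ne_zero_of_pow_succ_eq_one hu
  have hs := linearizedHom_one_pow_two_pow hcard (ω * u⁻¹) x
  rw [mul_pow, hωq, inv_pow, pow_eq_inv_of_pow_succ_eq_one hu, inv_inv] at hs
  rw [linearizedHom_apply, pow_two_pow_pred_add_one_sq hm, mul_pow, pow_two_pow_two_pow hcard,
    ← pow_mul, mul_comm 2, pow_mul, hs, kimForm_eq_mul_add_mul hω (mul_inv_cancel₀ hu0),
    linearizedHom_apply]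
  ring

theorem affEquiv_kimForm_gold [Fintype F] (hcard : Fintype.card F = 2 ^ (2 * m)) (hm : m ≠ 0)
    {ω u z a : F} (hω : ω ^ 2 + ω + 1 = 0) (hωq : ω ^ 2 ^ m = ω) (hu : u ^ (2 ^ m + 1) = 1)
    (hz : z ^ (2 ^ m + 1) = 1) (ha : a ^ 2 ^ m = a / z ^ 2) (haz : a ≠ z) :
    AffEquiv (fun x => kimForm (u + a * u⁻¹ ^ 2) (u ^ 2 + a * u⁻¹) a x (x ^ 2 ^ m))
      fun x => x ^ (2 ^ (m - 1) + 1) := by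
  have hu0 := ne_zero_of_pow_succ_eq_one hu
  have hz0 := ne_zero_of_pow_succ_eq_one hz
  have hu' := pow_eq_inv_of_pow_succ_eq_one hu
  have h₂ : (1 : F) ^ (2 ^ m + 1) ≠ (ω * u⁻¹) ^ (2 ^ m + 1) := by
    rw [one_pow, pow_succ, mul_pow, hωq, inv_pow, hu', inv_inv,
      show ω * u * (ω * u⁻¹) = ω ^ 2 by field_simp]
    exact fun h => ne_one_of_sq_add_add_one_eq_zero hω
      (CharTwo.sq_injective (h.symm.trans (one_pow 2).symm))
  have h₁ : (ω ^ 2 * u ^ 2 + ω * a * u⁻¹) ^ (2 ^ m + 1)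
      ≠ (ω ^ 2 * a * u⁻¹ ^ 2 + ω * u) ^ (2 ^ m + 1) := by
    rw [Ne, ← CharTwo.add_eq_zero, pow_two_pow_succ, pow_two_pow_succ]
    simp only [map_add, map_mul, map_pow, map_inv₀, iterateFrobenius_def, hωq, hu', ha, inv_inv]
    rw [div_eq_mul_inv, ← inv_pow,
      kim_norm_add_norm_eq hω (mul_inv_cancel₀ hu0) (mul_inv_cancel₀ hz0)]
    exact mul_ne_zero (pow_ne_zero 2 fun h => haz (CharTwo.add_eq_zero.1 h))
      (pow_ne_zero 2 (inv_ne_zero hz0))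
  refine affEquiv_of_eq_comp
    ((linearizedHom m _ _).comp (frobenius F 2 : F →+* F).toAddMonoidHom)
    (linearizedHom m 1 (ω * u⁻¹))
    ((linearizedHom_injective hcard h₁).comp (frobenius_inj F 2))
    (linearizedHom_injective hcard h₂) fun x => ?_
  rw [kimForm_eq_linearized_gold hcard hm hω hωq hu]
  rfl

end CharTwo

/-- Let `m ≥ 4` be even, `q = 2^m`, and `u, z ∈ U` with `u² ≠ z`. If the Kim-type function
with coefficients `a₁ = (u³+z)²/(u(u²+z)²)`, `a₂ = (u³+z)²/(u²+z)²`, `a₃ = uz²(u+1)²/(u²+z)²`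
is APN, then it is affine equivalent to `G₁(x) = x³` or to `G₂(x) = x^{2^{m-1}+1}`. -/
theorem kim_type_parametric_equiv_Gold
    (m : ℕ) (hm : 4 ≤ m) (hmeven : Even m) (F : Type*) [Field F] [Fintype F]
    (hcard : Fintype.card F = 2 ^ (2 * m))
    (u z : F) (hu : u ^ (2 ^ m + 1) = 1) (hz : z ^ (2 ^ m + 1) = 1) (huz : u ^ 2 ≠ z)
    (a₁ a₂ a₃ : F)
    (ha₁ : a₁ = (u ^ 3 + z) ^ 2 / (u * (u ^ 2 + z) ^ 2))
    (ha₂ : a₂ = (u ^ 3 + z) ^ 2 / (u ^ 2 + z) ^ 2)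
    (ha₃ : a₃ = u * z ^ 2 * (u + 1) ^ 2 / (u ^ 2 + z) ^ 2)
    (f : F → F)
    (hf : ∀ x : F, f x = x ^ (3 * 2 ^ m) + a₁ * x ^ (2 * 2 ^ m + 1)
        + a₂ * x ^ (2 ^ m + 2) + a₃ * x ^ 3)
    (hAPN : IsAPN f) :
    AffEquiv f (fun x : F => x ^ 3) ∨ AffEquiv f (fun x : F => x ^ (2 ^ (m - 1) + 1)) := by
  have : CharP F 2 := charP_of_card_eq_prime_pow hcard
  obtain ⟨ω, hω, hωq⟩ := exists_cubeRoot_pow_two_pow_eq_self hcard hmeven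
  have hu0 := ne_zero_of_pow_succ_eq_one hu
  have huz' : u ^ 2 + z ≠ 0 := fun h => huz (CharTwo.add_eq_zero.1 h)
  have hf' :
      f = fun x => kimForm (u + a₃ * u⁻¹ ^ 2) (u ^ 2 + a₃ * u⁻¹) a₃ x (x ^ 2 ^ m) := by
    funext x
    rw [hf, ha₁, ha₂, kimCoeff₁_eq hu0 huz', kimCoeff₂_eq hu0 huz', ← ha₃, kimForm]
    ring
  subst hf'
  by_cases h : a₃ = z
  · exact absurd hAPN (not_isAPN_kimForm hcard hω hωq hu (h ▸ hz))
  · exact Or.inr (affEquiv_kimForm_gold hcard (by omega) hω hωq hu hz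
      (ha₃ ▸ kimCoeff₃_pow_two_pow hu hz huz') h)
end

section
/- Let m ≥ 4, q = 2^m, and let f : F_{q²} → F_{q²} be given by f(x) = x^{3q} + a₁x^{2q+1} + a₂x^{q+2} + a₃x³ where a₁, a₂, a₃ ∈ F_q. If f is APN, then f is affine equivalent to a function of the form f₁(x) = x^{3q} + c₁x^{2q+1} + c₂x^{q+2} with c₁, c₂ ∈ F_q, or to a function of the form f₂(x) = x^{3q} + c₂x^{q+2} + x³ with c₂ ∈ F_q. -/
section

variable {F : Type*} [Field F]

theorem exists_pow_eq_self_ne_zero_ne_one [Fintype F] {q : ℕ} (hcard : Fintype.card F = q ^ 2)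
    (hq : 2 < q) : ∃ s : F, s ^ q = s ∧ s ≠ 0 ∧ s ≠ 1 := by
  -- the witness is the norm `g ^ (q + 1)` of a generator `g` of `Fˣ`
  obtain ⟨g, hg⟩ := IsCyclic.exists_ofOrder_eq_natCard (α := Fˣ)
  rw [Nat.card_units, Nat.card_eq_fintype_card, hcard] at hg
  refine ⟨(g : F) ^ (q + 1), ?_, pow_ne_zero _ g.ne_zero, fun h => ?_⟩
  · rw [← pow_mul, show (q + 1) * q = q ^ 2 + q by ring, pow_add, ← hcard,
      FiniteField.pow_card, pow_succ']
  · have hdvd : q ^ 2 - 1 ∣ q + 1 := hg ▸ orderOf_dvd_of_pow_eq_one (Units.ext (by simpa using h))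
    have hle := Nat.le_of_dvd (by omega) hdvd
    have hsq : q * 3 ≤ q ^ 2 := by nlinarith
    omega

section Frobenius

variable (p m : ℕ) [ExpChar F p]

/-- The subfield `𝔽_q`, `q = p ^ m`. -/
abbrev fixedSubfield : Subfield F := (iterateFrobenius F p m).eqLocusField (RingHom.id F)

variable {p m}

theorem mem_fixedSubfield {x : F} : x ∈ fixedSubfield p m ↔ x ^ p ^ m = x := by
  rw [RingHom.mem_eqLocusField, iterateFrobenius_def, RingHom.id_apply]

theorem kim_pow_eq_reverse (hinv : ∀ x : F, (x ^ p ^ m) ^ p ^ m = x) {a₁ a₂ a₃ : F}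
    (ha₁ : a₁ ∈ fixedSubfield p m) (ha₂ : a₂ ∈ fixedSubfield p m) (ha₃ : a₃ ∈ fixedSubfield p m)
    (x : F) :
    (x ^ (3 * p ^ m) + a₁ * x ^ (2 * p ^ m + 1) + a₂ * x ^ (p ^ m + 2) + a₃ * x ^ 3) ^ p ^ m =
      a₃ * x ^ (3 * p ^ m) + a₂ * x ^ (2 * p ^ m + 1) + a₁ * x ^ (p ^ m + 2) + x ^ 3 := by
  rw [mem_fixedSubfield] at ha₁ ha₂ ha₃
  calc _ = ((x ^ p ^ m) ^ 3 + a₁ * (x ^ p ^ m) ^ 2 * x + a₂ * x ^ p ^ m * x ^ 2 + a₃ * x ^ 3)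
        ^ p ^ m := by ring
    _ = x ^ 3 + a₁ * x ^ 2 * x ^ p ^ m + a₂ * x * (x ^ p ^ m) ^ 2 + a₃ * (x ^ p ^ m) ^ 3 := by
      simp only [add_pow_expChar_pow, mul_pow, ha₁, ha₂, ha₃, pow_right_comm _ _ (p ^ m), hinv]
    _ = _ := by ring

theorem kim_eq_of_pow_eq_self {q : ℕ} {x : F} (hx : x ^ q = x) (a₁ a₂ a₃ : F) :
    x ^ (3 * q) + a₁ * x ^ (2 * q + 1) + a₂ * x ^ (q + 2) + a₃ * x ^ 3 =
      (1 + a₁ + a₂ + a₃) * x ^ 3 := by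
  rw [mul_comm 3, mul_comm 2, pow_add, pow_add, pow_mul, pow_mul, hx]
  ring

theorem eq_zero_of_mul_add_mul_pow_eq_zero (hinv : ∀ x : F, (x ^ p ^ m) ^ p ^ m = x) {α β w : F}
    (hα : α ∈ fixedSubfield p m) (hβ : β ∈ fixedSubfield p m) (hαβ : α ^ 2 ≠ β ^ 2)
    (hw : α * w + β * w ^ p ^ m = 0) : w = 0 := by
  have hw' : α * w ^ p ^ m + β * w = 0 := by
    have := congrArg (· ^ p ^ m) hw
    simpa only [add_pow_expChar_pow, mul_pow, mem_fixedSubfield.1 hα, mem_fixedSubfield.1 hβ,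
      hinv, zero_pow (expChar_pow_pos F p m).ne', add_comm (α * _)] using this
  have : (α ^ 2 - β ^ 2) * w = 0 := by linear_combination α * hw - β * hw'
  exact (mul_eq_zero.1 this).resolve_left (sub_ne_zero.2 hαβ)

theorem isAffinePerm_mul_add_mul_pow [Finite F] (hinv : ∀ x : F, (x ^ p ^ m) ^ p ^ m = x)
    {α β γ : F} (hα : α ∈ fixedSubfield p m) (hβ : β ∈ fixedSubfield p m) (hαβ : α ^ 2 ≠ β ^ 2)
    (hγ : γ ≠ 0) : IsAffinePerm fun z : F => γ * (α * z + β * z ^ p ^ m) := by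
  have hq : p ^ m ≠ 0 := (expChar_pow_pos F p m).ne'
  refine ⟨Finite.injective_iff_bijective.1 fun y z hyz => ?_, fun y z => ?_⟩
  · refine sub_eq_zero.1 (eq_zero_of_mul_add_mul_pow_eq_zero hinv hα hβ hαβ ?_)
    rw [sub_pow_expChar_pow]
    linear_combination mul_left_cancel₀ hγ hyz
  · simp only [add_pow_expChar_pow, zero_pow hq]
    ring

theorem affEquiv_of_eq_mul_add_mul_pow [Finite F] (hinv : ∀ x : F, (x ^ p ^ m) ^ p ^ m = x)
    {α β γ : F} (hα : α ∈ fixedSubfield p m) (hβ : β ∈ fixedSubfield p m) (hαβ : α ^ 2 ≠ β ^ 2)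
    (hγ : γ ≠ 0) {f g : F → F} (hg : ∀ x, g x = γ * (α * f x + β * f x ^ p ^ m)) :
    AffEquiv f g :=
  ⟨_, id, isAffinePerm_mul_add_mul_pow hinv hα hβ hαβ hγ,
    ⟨Function.bijective_id, fun _ _ => by simp⟩, hg⟩

theorem not_isAPN_of_forall_mem_eq_zero [Fintype F] (hcard : Fintype.card F = (p ^ m) ^ 2)
    (hq : 2 < p ^ m) {f : F → F} (hf : ∀ x ∈ fixedSubfield p m, f x = 0) : ¬IsAPN f := by
  intro hAPN
  obtain ⟨s, hs, hs₀, hs₁⟩ := exists_pow_eq_self_ne_zero_ne_one hcard hq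
  have hsol : ∀ x ∈ fixedSubfield p m, f (x + 1) + f x = 0 := fun x hx => by
    rw [hf x hx, hf _ (add_mem hx (one_mem _)), add_zero]
  have hle := hAPN 1 one_ne_zero 0
  have hlt : 2 < {x : F | f (x + 1) + f x = 0}.ncard :=
    (Set.two_lt_ncard (Set.toFinite _)).2 ⟨0, hsol 0 (zero_mem _), 1, hsol 1 (one_mem _),
      s, hsol s (mem_fixedSubfield.2 hs), zero_ne_one, hs₀.symm, hs₁.symm⟩
  exact lt_irrefl _ (hlt.trans_le hle)

end Frobenius

section CharTwo

variable {m : ℕ} [CharP F 2]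

theorem affEquiv_kim_of_ne_one [Finite F] (hinv : ∀ x : F, (x ^ 2 ^ m) ^ 2 ^ m = x)
    {a₁ a₂ a₃ : F} (ha₁ : a₁ ∈ fixedSubfield 2 m) (ha₂ : a₂ ∈ fixedSubfield 2 m)
    (ha₃ : a₃ ∈ fixedSubfield 2 m) (h₃ : a₃ ≠ 1) {f : F → F}
    (hf : ∀ x, f x = x ^ (3 * 2 ^ m) + a₁ * x ^ (2 * 2 ^ m + 1) + a₂ * x ^ (2 ^ m + 2)
      + a₃ * x ^ 3) :
    AffEquiv f fun x => x ^ (3 * 2 ^ m) + (a₁ + a₃ * a₂) / (1 + a₃ ^ 2) * x ^ (2 * 2 ^ m + 1)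
      + (a₂ + a₃ * a₁) / (1 + a₃ ^ 2) * x ^ (2 ^ m + 2) := by
  have h₃' : (1 : F) ^ 2 ≠ a₃ ^ 2 := by rwa [Ne, CharTwo.sq_inj, eq_comm]
  have hd : 1 + a₃ ^ 2 ≠ 0 := by rwa [one_pow, Ne, ← CharTwo.add_eq_zero] at h₃'
  refine affEquiv_of_eq_mul_add_mul_pow hinv (one_mem _) ha₃ h₃' (inv_ne_zero hd) fun x => ?_
  rw [hf, kim_pow_eq_reverse hinv ha₁ ha₂ ha₃]
  field_simp
  linear_combination -a₃ * x ^ 3 * CharTwo.two_eq_zero (R := F)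

theorem affEquiv_kim_of_eq_one [Finite F] (hinv : ∀ x : F, (x ^ 2 ^ m) ^ 2 ^ m = x)
    {a₁ a₂ a₃ : F} (ha₁ : a₁ ∈ fixedSubfield 2 m) (ha₂ : a₂ ∈ fixedSubfield 2 m) (h₃ : a₃ = 1)
    (h₁₂ : a₁ ≠ a₂) {f : F → F}
    (hf : ∀ x, f x = x ^ (3 * 2 ^ m) + a₁ * x ^ (2 * 2 ^ m + 1) + a₂ * x ^ (2 ^ m + 2)
      + a₃ * x ^ 3) :
    AffEquiv f fun x => x ^ (3 * 2 ^ m) + (a₁ + a₂) * x ^ (2 ^ m + 2) + x ^ 3 := by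
  subst h₃
  have hd : a₁ + a₂ ≠ 0 := by rwa [Ne, CharTwo.add_eq_zero]
  refine affEquiv_of_eq_mul_add_mul_pow hinv ha₂ ha₁ (by rwa [Ne, CharTwo.sq_inj, eq_comm])
    (inv_ne_zero hd) fun x => ?_
  rw [hf, kim_pow_eq_reverse hinv ha₁ ha₂ (one_mem _)]
  field_simp
  linear_combination
    a₁ * a₂ * (x ^ (2 ^ m + 2) - x ^ (2 * 2 ^ m + 1)) * CharTwo.two_eq_zero (R := F)

end CharTwo

end

/-- A Kim-type APN function with coefficients in the subfield `𝔽_q` is affine equivalent to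
a function of the form `f₁(x) = x^{3q} + c₁x^{2q+1} + c₂x^{q+2}` or of the form
`f₂(x) = x^{3q} + c₂x^{q+2} + x³` with `c₁, c₂ ∈ 𝔽_q`. Here `q = 2^m`, `m ≥ 4`, and
membership in `𝔽_q` is expressed as `a^(2^m) = a`. -/
theorem kim_type_subfield_normal_form
    (m : ℕ) (hm : 4 ≤ m) (F : Type*) [Field F] [Fintype F]
    (hcard : Fintype.card F = 2 ^ (2 * m))
    (a₁ a₂ a₃ : F)
    (ha₁ : a₁ ^ (2 ^ m) = a₁) (ha₂ : a₂ ^ (2 ^ m) = a₂) (ha₃ : a₃ ^ (2 ^ m) = a₃)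
    (f : F → F)
    (hf : ∀ x : F, f x = x ^ (3 * 2 ^ m) + a₁ * x ^ (2 * 2 ^ m + 1)
        + a₂ * x ^ (2 ^ m + 2) + a₃ * x ^ 3)
    (hAPN : IsAPN f) :
    (∃ c₁ c₂ : F, c₁ ^ (2 ^ m) = c₁ ∧ c₂ ^ (2 ^ m) = c₂ ∧
        AffEquiv f (fun x : F => x ^ (3 * 2 ^ m) + c₁ * x ^ (2 * 2 ^ m + 1)
          + c₂ * x ^ (2 ^ m + 2))) ∨
    (∃ c₂ : F, c₂ ^ (2 ^ m) = c₂ ∧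
        AffEquiv f (fun x : F => x ^ (3 * 2 ^ m) + c₂ * x ^ (2 ^ m + 2) + x ^ 3)) := by
  have : CharP F 2 := charP_of_card_eq_prime_pow hcard
  have hcard' : Fintype.card F = (2 ^ m) ^ 2 := by rw [hcard, pow_mul']
  have hinv (x : F) : (x ^ 2 ^ m) ^ 2 ^ m = x := by
    rw [← pow_mul, ← sq, ← hcard', FiniteField.pow_card]
  rw [← mem_fixedSubfield] at ha₁ ha₂ ha₃
  by_cases h₃ : a₃ = 1
  · refine Or.inr ⟨a₁ + a₂, mem_fixedSubfield.1 (add_mem ha₁ ha₂),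
      affEquiv_kim_of_eq_one hinv ha₁ ha₂ h₃ ?_ hf⟩
    rintro rfl
    refine not_isAPN_of_forall_mem_eq_zero hcard'
      ((by norm_num : 2 < 2 ^ 4).trans_le (Nat.pow_le_pow_right two_pos hm)) (fun x hx => ?_) hAPN
    rw [hf, kim_eq_of_pow_eq_self (mem_fixedSubfield.1 hx), h₃]
    linear_combination (1 + a₁) * x ^ 3 * CharTwo.two_eq_zero (R := F)
  · have hd : 1 + a₃ ^ 2 ∈ fixedSubfield 2 m := add_mem (one_mem _) (pow_mem ha₃ 2)
    exact Or.inl ⟨_, _, mem_fixedSubfield.1 (div_mem (add_mem ha₁ (mul_mem ha₃ ha₂)) hd),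
      mem_fixedSubfield.1 (div_mem (add_mem ha₂ (mul_mem ha₃ ha₁)) hd),
      affEquiv_kim_of_ne_one hinv ha₁ ha₂ ha₃ h₃ hf⟩
end

section
/- Let m be even, q = 2^m, let ω ∈ F_q be a primitive cube root of unity, and let u ∈ U. Then the map L₂ : F_{q²} → F_{q²} defined by L₂(x) = x^{2q} + ωu²x² is a bijection of F_{q²}. -/
/-!
In characteristic 2 the map `L₂` is additive, so it suffices to show that `L₂ z = 0` forces
`z = 0`. If `z ≠ 0` and `z^{2q} = ω u² z²`, raising to the power `q + 1` and using `z^{q²} = z`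
gives `(ω u²)^{q+1} = 1`. Since `u^{q+1} = 1` and `ω^q = ω`, this says `ω² = 1`, which together
with `ω² + ω + 1 = 0` yields `ω = 0` in characteristic 2, a contradiction.
-/

theorem injective_pow_two_mul_two_pow_add_mul_sq {F : Type*} [Field F] [CharP F 2] (k : ℕ)
    (c : F) (hker : ∀ z : F, z ^ (2 * 2 ^ k) = c * z ^ 2 → z = 0) :
    Function.Injective (fun x : F => x ^ (2 * 2 ^ k) + c * x ^ 2) := by
  intro x y hxy
  have hexp : 2 * 2 ^ k = 2 ^ (k + 1) := (pow_succ' 2 k).symm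
  have hdiff : (x - y) ^ (2 * 2 ^ k) + c * (x - y) ^ 2 = 0 := by
    rw [hexp, sub_pow_char_pow, sub_pow_char, ← hexp]
    linear_combination hxy
  exact sub_eq_zero.mp (hker _ (CharTwo.add_eq_zero.mp hdiff))

theorem pow_succ_eq_one_of_pow_two_mul_eq {F : Type*} [Field F] [Fintype F] {q : ℕ}
    (hcard : Fintype.card F = q ^ 2) {c z : F} (hz : z ≠ 0) (h : z ^ (2 * q) = c * z ^ 2) :
    c ^ (q + 1) = 1 := by
  have hfrob : z ^ (q ^ 2) = z := hcard ▸ FiniteField.pow_card z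
  have hpow : c ^ (q + 1) * z ^ (2 * (q + 1)) = z ^ (2 * (q + 1)) :=
    calc c ^ (q + 1) * z ^ (2 * (q + 1)) = (c * z ^ 2) ^ (q + 1) := by ring
      _ = (z ^ (q ^ 2)) ^ 2 * z ^ (2 * q) := by rw [← h]; ring
      _ = z ^ (2 * (q + 1)) := by rw [hfrob]; ring
  exact (mul_eq_right₀ (pow_ne_zero _ hz)).mp hpow

theorem sq_ne_one_of_sq_add_add_one_eq_zero {F : Type*} [Field F] [CharP F 2] {ω : F}
    (hω3 : ω ^ 2 + ω + 1 = 0) : ω ^ 2 ≠ 1 := by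
  intro hsq
  have hω0 : ω = 0 := by linear_combination hω3 - hsq - CharTwo.two_eq_zero (R := F)
  simp [hω0] at hsq

theorem L2_bijective_general
    (m : ℕ) (F : Type*) [Field F] [Fintype F]
    (hcard : Fintype.card F = 2 ^ (2 * m))
    (ω : F) (hω : ω ^ (2 ^ m) = ω) (hω3 : ω ^ 2 + ω + 1 = 0)
    (u : F) (hu : u ^ (2 ^ m + 1) = 1) :
    Function.Bijective (fun x : F => x ^ (2 * 2 ^ m) + ω * u ^ 2 * x ^ 2) := by
  have : CharP F 2 := charP_of_card_eq_prime_pow hcard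
  refine Finite.injective_iff_bijective.mp (injective_pow_two_mul_two_pow_add_mul_sq m _ ?_)
  intro z hz
  by_contra hz0
  have hcard' : Fintype.card F = (2 ^ m) ^ 2 := by rw [hcard, ← pow_mul, mul_comm]
  have hnorm := pow_succ_eq_one_of_pow_two_mul_eq hcard' hz0 hz
  have hωsq : ω ^ 2 = 1 := by
    rwa [mul_pow, pow_right_comm u, hu, one_pow, mul_one, pow_succ, hω, ← sq] at hnorm
  exact sq_ne_one_of_sq_add_add_one_eq_zero hω3 hωsq

/-- Let `m` be even and positive, `q = 2^m`, `ω ∈ 𝔽_q` a primitive cube root of unity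
(`ω² + ω + 1 = 0`, `ω^(2^m) = ω`), and `u` an element of the unit circle
`U = {z : z^(q+1) = 1}` of `𝔽_{q²}`. Then `L₂(x) = x^{2q} + ωu²x²` is a bijection. -/
theorem L2_bijective
    (m : ℕ) (hm : 0 < m) (hmeven : Even m) (F : Type*) [Field F] [Fintype F]
    (hcard : Fintype.card F = 2 ^ (2 * m))
    (ω : F) (hω : ω ^ (2 ^ m) = ω) (hω3 : ω ^ 2 + ω + 1 = 0)
    (u : F) (hu : u ^ (2 ^ m + 1) = 1) :
    Function.Bijective (fun x : F => x ^ (2 * 2 ^ m) + ω * u ^ 2 * x ^ 2) :=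
  L2_bijective_general m F hcard ω hω hω3 u hu
end

section
/- Let q = 2^m and suppose a₁, a₂, a₃ ∈ F_q. Then θ₁ = (1 + a₁ + a₂ + a₃)², and the following two polynomial identities hold: θ₁²θ₄ + θ₁θ₂θ̄₂ + θ₂²θ₃ + θ̄₂²θ̄₃ = θ₁·S² and θ₁²θ₃ + θ₁θ̄₂² + θ₂²θ₃ + θ̄₂²θ̄₃ = θ₁·S·T, where S = a₁² + a₁a₃ + a₂² + a₂ and T = a₁a₃ + a₂ + a₃² + 1. -/
/-!
Over `𝔽_q` conjugation is trivial, so `θ̄₂ = θ₂`, `θ̄₃ = θ₃` and the terms `θ₂²θ₃ + θ̄₂²θ̄₃`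
cancel in characteristic `2`. The two Γ-polynomials thus become `θ₁ (θ₁θ₄ + θ₂²)` and
`θ₁ (θ₁θ₃ + θ₂²)`, and the factors `θ₁θ₄ + θ₂² = S²`, `θ₁θ₃ + θ₂² = S T` are polynomial
identities modulo `2`.
-/

theorem add_pow_expChar_pow_eq_self {R : Type*} [CommSemiring R] {p : ℕ} [ExpChar R p] {n : ℕ}
    {x y : R} (hx : x ^ p ^ n = x) (hy : y ^ p ^ n = y) :
    (x + y) ^ p ^ n = x + y := by
  rw [add_pow_expChar_pow, hx, hy]

namespace CharTwo

variable {R : Type*} [CommRing R] [CharP R 2] (a₁ a₂ a₃ : R)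

theorem one_add_add_add_sq :
    (1 + a₁ + a₂ + a₃) ^ 2 = 1 + a₁ ^ 2 + a₂ ^ 2 + a₃ ^ 2 := by
  simp only [add_sq, one_pow]

theorem theta_one_mul_theta_four_add_theta_two_sq :
    (1 + a₁ ^ 2 + a₂ ^ 2 + a₃ ^ 2) * (a₁ ^ 2 + a₂ ^ 2) + (a₁ + a₂ * a₃) ^ 2
      = (a₁ ^ 2 + a₁ * a₃ + a₂ ^ 2 + a₂) ^ 2 := by
  linear_combination
    (a₁ ^ 2 + a₂ ^ 2 * a₃ ^ 2 - a₁ * a₂ ^ 2 * a₃ - a₁ ^ 2 * a₂ - a₁ ^ 3 * a₃ - a₂ ^ 3)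
      * two_eq_zero (R := R)

theorem theta_one_mul_theta_three_add_theta_two_sq :
    (1 + a₁ ^ 2 + a₂ ^ 2 + a₃ ^ 2) * (a₂ + a₁ * a₃) + (a₁ + a₂ * a₃) ^ 2
      = (a₁ ^ 2 + a₁ * a₃ + a₂ ^ 2 + a₂) * (a₁ * a₃ + a₂ + a₃ ^ 2 + 1) := by
  linear_combination (-(a₁ ^ 2 * a₃ ^ 2) - a₂ ^ 2) * two_eq_zero (R := R)

end CharTwo

theorem gamma_factorization_subfield_general
    (m : ℕ) (F : Type*) [Field F] [Fintype F]
    (hcard : Fintype.card F = 2 ^ (2 * m))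
    (a₁ a₂ a₃ : F)
    (ha₁ : a₁ ^ (2 ^ m) = a₁) (ha₂ : a₂ ^ (2 ^ m) = a₂) (ha₃ : a₃ ^ (2 ^ m) = a₃)
    (θ₁ θ₂ θ₃ θ₄ S T : F)
    (hθ₁ : θ₁ = 1 + a₁ ^ 2 + a₂ * a₂ ^ (2 ^ m) + a₃ * a₃ ^ (2 ^ m))
    (hθ₂ : θ₂ = a₁ + a₂ ^ (2 ^ m) * a₃)
    (hθ₃ : θ₃ = a₂ ^ (2 ^ m) + a₁ * a₃ ^ (2 ^ m))
    (hθ₄ : θ₄ = a₁ ^ 2 + a₂ * a₂ ^ (2 ^ m))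
    (hS : S = a₁ ^ 2 + a₁ * a₃ + a₂ ^ 2 + a₂)
    (hT : T = a₁ * a₃ + a₂ + a₃ ^ 2 + 1) :
    θ₁ = (1 + a₁ + a₂ + a₃) ^ 2 ∧
    θ₁ ^ 2 * θ₄ + θ₁ * θ₂ * θ₂ ^ (2 ^ m) + θ₂ ^ 2 * θ₃
        + (θ₂ ^ (2 ^ m)) ^ 2 * θ₃ ^ (2 ^ m) = θ₁ * S ^ 2 ∧
    θ₁ ^ 2 * θ₃ + θ₁ * (θ₂ ^ (2 ^ m)) ^ 2 + θ₂ ^ 2 * θ₃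
        + (θ₂ ^ (2 ^ m)) ^ 2 * θ₃ ^ (2 ^ m) = θ₁ * S * T := by
  have : CharP F 2 := charP_of_card_eq_prime_pow hcard
  rw [ha₂] at hθ₁ hθ₂ hθ₃ hθ₄
  rw [ha₃] at hθ₁ hθ₃
  have hθ₂_fixed : θ₂ ^ 2 ^ m = θ₂ :=
    hθ₂ ▸ add_pow_expChar_pow_eq_self ha₁ (by rw [mul_pow, ha₂, ha₃])
  have hθ₃_fixed : θ₃ ^ 2 ^ m = θ₃ :=
    hθ₃ ▸ add_pow_expChar_pow_eq_self ha₂ (by rw [mul_pow, ha₁, ha₃])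
  have hθ₁_sq : θ₁ = (1 + a₁ + a₂ + a₃) ^ 2 := by
    rw [hθ₁, CharTwo.one_add_add_add_sq]
    ring
  have hS_sq : θ₁ * θ₄ + θ₂ ^ 2 = S ^ 2 := by
    rw [hθ₁, hθ₂, hθ₄, hS]
    linear_combination CharTwo.theta_one_mul_theta_four_add_theta_two_sq a₁ a₂ a₃
  have hST : θ₁ * θ₃ + θ₂ ^ 2 = S * T := by
    rw [hθ₁, hθ₂, hθ₃, hS, hT]
    linear_combination CharTwo.theta_one_mul_theta_three_add_theta_two_sq a₁ a₂ a₃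
  rw [hθ₂_fixed, hθ₃_fixed]
  exact ⟨hθ₁_sq,
    by linear_combination θ₁ * hS_sq + θ₂ ^ 2 * θ₃ * CharTwo.two_eq_zero (R := F),
    by linear_combination θ₁ * hST + θ₂ ^ 2 * θ₃ * CharTwo.two_eq_zero (R := F)⟩

/-- If `a₁, a₂, a₃` lie in the subfield `𝔽_q` of `𝔽_{q²}` (`q = 2^m`; membership is
expressed as `a^(2^m) = a`), then `θ₁ = (1 + a₁ + a₂ + a₃)²` and the two Γ-polynomials
factor as `θ₁·S²` and `θ₁·S·T`, where `S = a₁² + a₁a₃ + a₂² + a₂` and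
`T = a₁a₃ + a₂ + a₃² + 1`. Conjugation is `z̄ = z^q`. -/
theorem gamma_factorization_subfield
    (m : ℕ) (hm : 1 ≤ m) (F : Type*) [Field F] [Fintype F]
    (hcard : Fintype.card F = 2 ^ (2 * m))
    (a₁ a₂ a₃ : F)
    (ha₁ : a₁ ^ (2 ^ m) = a₁) (ha₂ : a₂ ^ (2 ^ m) = a₂) (ha₃ : a₃ ^ (2 ^ m) = a₃)
    (θ₁ θ₂ θ₃ θ₄ S T : F)
    (hθ₁ : θ₁ = 1 + a₁ ^ 2 + a₂ * a₂ ^ (2 ^ m) + a₃ * a₃ ^ (2 ^ m))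
    (hθ₂ : θ₂ = a₁ + a₂ ^ (2 ^ m) * a₃)
    (hθ₃ : θ₃ = a₂ ^ (2 ^ m) + a₁ * a₃ ^ (2 ^ m))
    (hθ₄ : θ₄ = a₁ ^ 2 + a₂ * a₂ ^ (2 ^ m))
    (hS : S = a₁ ^ 2 + a₁ * a₃ + a₂ ^ 2 + a₂)
    (hT : T = a₁ * a₃ + a₂ + a₃ ^ 2 + 1) :
    θ₁ = (1 + a₁ + a₂ + a₃) ^ 2 ∧
    θ₁ ^ 2 * θ₄ + θ₁ * θ₂ * θ₂ ^ (2 ^ m) + θ₂ ^ 2 * θ₃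
        + (θ₂ ^ (2 ^ m)) ^ 2 * θ₃ ^ (2 ^ m) = θ₁ * S ^ 2 ∧
    θ₁ ^ 2 * θ₃ + θ₁ * (θ₂ ^ (2 ^ m)) ^ 2 + θ₂ ^ 2 * θ₃
        + (θ₂ ^ (2 ^ m)) ^ 2 * θ₃ ^ (2 ^ m) = θ₁ * S * T :=
  gamma_factorization_subfield_general m F hcard a₁ a₂ a₃ ha₁ ha₂ ha₃ θ₁ θ₂ θ₃ θ₄ S T hθ₁ hθ₂ hθ₃
    hθ₄ hS hT
end
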